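/- In Mechanism 2, the truthful strategy profile in which every agent i reports R_k(i) = R̃_k for all agents k is a Nash equilibrium (no agent can strictly increase her true utility by unilaterally changing her report), and its outcome is a maxmin-optimal allocation. -/

import Mathlib

open scoped Classical
open Real

namespace BandwidthAlloc

/-- A bid: `none` denotes the special bid β; `some r` denotes the real bid `r ≥ 0`. -/
abbrev Bid := Option NNReal

/-- Numeric value of a bid (β is treated as 0 in arithmetic). -/
noncomputable def bval (b : Bid) : ℝ := ((b.getD 0 : NNReal) : ℝ)

/-- A bid is positive when it is neither 0 nor β. -/
def posBid (b : Bid) : Prop := 0 < bval b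

/-- Utility of the bundle `xi` for an agent with desired set `Ri`: `min_{j ∈ Ri} xi j`. -/
noncomputable def bundleUtil {m : ℕ} (Ri : Finset (Fin m)) (xi : Fin m → ℝ) : ℝ :=
  sInf (xi '' (Ri : Set (Fin m)))

/-- Bandwidth-allocation utility of agent `i` under allocation `x`. -/
noncomputable def util {n m : ℕ} (R : Fin n → Finset (Fin m))
    (x : Fin n → Fin m → ℝ) (i : Fin n) : ℝ :=
  bundleUtil (R i) (x i)

/-- Weights: `w R i j = 1` iff `j ∈ R i`, else `0`. -/
noncomputable def w {n m : ℕ} (R : Fin n → Finset (Fin m)) (i : Fin n) (j : Fin m) : ℝ :=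
  if j ∈ R i then 1 else 0

/-- A valid (nonnegative, supply-respecting) allocation. -/
def validAlloc {n m : ℕ} (s : Fin m → ℝ) (x : Fin n → Fin m → ℝ) : Prop :=
  (∀ i j, 0 ≤ x i j) ∧ ∀ j, ∑ i, x i j ≤ s j

/-- CES welfare of the utility vector `v` (`ρ = 0` is Nash welfare; for `ρ < 0` a zero
utility yields welfare `0`, the limiting convention). -/
noncomputable def ces (ρ : ℝ) {n : ℕ} (v : Fin n → ℝ) : ℝ :=
  if ρ = 0 then ∏ i, v i
  else if ρ < 0 ∧ ∃ i, v i = 0 then 0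
  else (∑ i, v i ^ ρ) ^ (1 / ρ)

/-- `Ψ_ρ`: `x` is a valid allocation maximizing CES welfare among valid allocations. -/
def maxCES (ρ : ℝ) {n m : ℕ} (s : Fin m → ℝ) (R : Fin n → Finset (Fin m))
    (x : Fin n → Fin m → ℝ) : Prop :=
  validAlloc s x ∧ ∀ y, validAlloc s y → ces ρ (util R y) ≤ ces ρ (util R x)

/-- Constraint curve: continuous, normalized, strictly increasing, nonnegative on `[0,∞)`. -/
def IsConstraintCurve (f : ℝ → ℝ) : Prop :=
  ContinuousOn f (Set.Ici 0) ∧ f 0 = 0 ∧ StrictMonoOn f (Set.Ici 0) ∧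
    ∀ y ∈ Set.Ici (0 : ℝ), 0 ≤ f y

/-- `g` is identically zero on `[0,∞)`. -/
def zeroOn (g : ℝ → ℝ) : Prop := ∀ y ∈ Set.Ici (0 : ℝ), g y = 0

/-- Price curve: continuous, normalized, nonnegative, and either strictly increasing or
identically zero on `[0,∞)`. -/
def IsPriceCurve (g : ℝ → ℝ) : Prop :=
  ContinuousOn g (Set.Ici 0) ∧ g 0 = 0 ∧ (∀ y ∈ Set.Ici (0 : ℝ), 0 ≤ g y) ∧
    (StrictMonoOn g (Set.Ici 0) ∨ zeroOn g)

/-- Cost of the bundle `xi` under price curves `g`. -/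
noncomputable def cost {m : ℕ} (g : Fin m → ℝ → ℝ) (xi : Fin m → ℝ) : ℝ :=
  ∑ j, g j (xi j)

/-- `xi` is in the demand set of an agent with desired set `Ri` under price curves `g`. -/
def inDemand {m : ℕ} (g : Fin m → ℝ → ℝ) (Ri : Finset (Fin m)) (xi : Fin m → ℝ) : Prop :=
  (∀ j, 0 ≤ xi j) ∧ cost g xi ≤ 1 ∧
    ∀ yi : Fin m → ℝ, (∀ j, 0 ≤ yi j) → cost g yi ≤ 1 → bundleUtil Ri yi ≤ bundleUtil Ri xi

/-- Price curve equilibrium. -/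
def isPCE {n m : ℕ} (s : Fin m → ℝ) (R : Fin n → Finset (Fin m))
    (x : Fin n → Fin m → ℝ) (g : Fin m → ℝ → ℝ) : Prop :=
  (∀ i, inDemand g (R i) (x i)) ∧ (∀ j, ∑ i, x i j ≤ s j) ∧
    ∀ j, ¬ zeroOn (g j) → ∑ i, x i j = s j

/-- Step 1 of the ATP allocation rule: proportional sharing. -/
noncomputable def atp1 {n m : ℕ} (s : Fin m → ℝ) (b : Fin n → Fin m → Bid)
    (i : Fin n) (j : Fin m) : ℝ :=
  bval (b i j) / (∑ k, bval (b k j)) * s j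

/-- Steps 1–2 of the ATP allocation rule: goods with a positive bid are shared
proportionally; on a good where everyone bids `0` or `β`, an agent bidding `β` receives
as much as she receives of some fixed good on which she bids positively. -/
noncomputable def atp2 {n m : ℕ} (s : Fin m → ℝ) (b : Fin n → Fin m → Bid)
    (i : Fin n) (j : Fin m) : ℝ :=
  if ∃ k, posBid (b k j) then atp1 s b i j
  else if b i j = none then
    (if h : ∃ ℓ, posBid (b i ℓ) then atp1 s b i (Classical.choose h) else 0)
  else 0

/-- The full ATP allocation rule (steps 1–3): agents bidding `β` on an oversubscribed
step-2 good are penalized with the zero bundle. -/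
noncomputable def atp {n m : ℕ} (s : Fin m → ℝ) (b : Fin n → Fin m → Bid)
    (i : Fin n) (j : Fin m) : ℝ :=
  if ∃ ℓ, (¬ ∃ k, posBid (b k ℓ)) ∧ b i ℓ = none ∧ s ℓ < ∑ k, atp2 s b k ℓ then 0
  else atp2 s b i j

/-- Total bid-constraint cost `C_f(b_i)` of agent `i`'s bid vector. -/
noncomputable def bidCost {m : ℕ} (f : Fin m → ℝ → ℝ) (bi : Fin m → Bid) : ℝ :=
  ∑ j, f j (bval (bi j))

/-- A bid vector is feasible if it obeys the bid constraint `C_f(b_i) ≤ 1`. -/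
def feasibleBid {m : ℕ} (f : Fin m → ℝ → ℝ) (bi : Fin m → Bid) : Prop :=
  bidCost f bi ≤ 1

/-- `b` is a Nash equilibrium of `ATP(f)`: all bids are feasible and no agent can
strictly increase her utility by a unilateral feasible deviation. -/
def isNE {n m : ℕ} (s : Fin m → ℝ) (f : Fin m → ℝ → ℝ)
    (R : Fin n → Finset (Fin m)) (b : Fin n → Fin m → Bid) : Prop :=
  (∀ i, feasibleBid f (b i)) ∧
    ∀ (i : Fin n) (bi' : Fin m → Bid), feasibleBid f bi' →
      util R (atp s (Function.update b i bi')) i ≤ util R (atp s b) i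

/-- `NE_X(ATP(f))`: allocations arising from Nash equilibrium bid profiles. -/
def NEX {n m : ℕ} (s : Fin m → ℝ) (f : Fin m → ℝ → ℝ)
    (R : Fin n → Finset (Fin m)) : Set (Fin n → Fin m → ℝ) :=
  {x | ∃ b, isNE s f R b ∧ x = atp s b}

/-- `f` is homogeneous of degree `α` on the nonnegative reals. -/
def Homog (f : ℝ → ℝ) (α : ℝ) : Prop :=
  ∀ c ≥ (0 : ℝ), ∀ y ≥ (0 : ℝ), f (c * y) = c ^ α * f y

/-- `γ* = max {γ ≥ 0 : γ · Σ_i w_{ij} ≤ s_j for all j}` of Mechanism 1. -/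
noncomputable def gammaStar {n m : ℕ} (s : Fin m → ℝ) (R : Fin n → Finset (Fin m)) : ℝ :=
  sSup {γ : ℝ | 0 ≤ γ ∧ ∀ j, γ * ∑ i, w R i j ≤ s j}

/-- Mechanism 1: `x i j = γ* · w i j`. -/
noncomputable def mech1 {n m : ℕ} (s : Fin m → ℝ) (R : Fin n → Finset (Fin m)) :
    Fin n → Fin m → ℝ :=
  fun i j => gammaStar s R * w R i j

/-- `min_i u_i(x_i)`. -/
noncomputable def minUtil {n m : ℕ} (R : Fin n → Finset (Fin m))
    (x : Fin n → Fin m → ℝ) : ℝ :=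
  sInf (Set.range fun i => util R x i)

/-- `x` is maxmin-optimal: valid and attaining the maximum of `min_i u_i` over valid
allocations. -/
def maxminOptimal {n m : ℕ} (s : Fin m → ℝ) (R : Fin n → Finset (Fin m))
    (x : Fin n → Fin m → ℝ) : Prop :=
  validAlloc s x ∧ ∀ y, validAlloc s y → minUtil R y ≤ minUtil R x

/-- Mechanism 2: `P i k` is the set agent `i` claims agent `k` desires.
`eta P i = |{k : R_k(k) ≠ R_k(i)}|`. -/
noncomputable def eta {n m : ℕ} (P : Fin n → Fin n → Finset (Fin m)) (i : Fin n) : ℕ :=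
  (Finset.univ.filter fun k => P k k ≠ P i k).card

/-- Agent `i` is in `N̄`: for some `k`, `R_k(k) ⊊ R_k(i)`. -/
def inNbar {n m : ℕ} (P : Fin n → Fin n → Finset (Fin m)) (i : Fin n) : Prop :=
  ∃ k, P k k ⊂ P i k

/-- The penalty factor `α_i` of Mechanism 2. -/
noncomputable def alpha {n m : ℕ} (P : Fin n → Fin n → Finset (Fin m)) (i : Fin n) : ℝ :=
  if inNbar P i then 0 else 1 - (eta P i : ℝ) / n

/-- Effective reported sets of Mechanism 2: agents in `N̄` are replaced by `∅`. -/
noncomputable def effSets {n m : ℕ} (P : Fin n → Fin n → Finset (Fin m)) :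
    Fin n → Finset (Fin m) :=
  fun i => if inNbar P i then ∅ else P i i

/-- Mechanism 2: the allocation `x_i = α_i · y_i` where `y` is the Mechanism 1 outcome
on the effective sets. -/
noncomputable def mech2 {n m : ℕ} (s : Fin m → ℝ) (P : Fin n → Fin n → Finset (Fin m)) :
    Fin n → Fin m → ℝ :=
  fun i j => alpha P i * mech1 s (effSets P) i j

/-!
Under truthful reports nobody lands in `N̄` and every `α_i = 1`, so Mechanism 2 coincides with
Mechanism 1 on the true sets: everyone receives `γ*`. This is maxmin-optimal, because a valid
allocation whose minimum utility is `t ≥ 0` gives every agent at least `t` of each desired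
good, so `t` is feasible in the definition of `γ*`.

If agent `i` deviates, either her effective set misses one of her desired goods, and she gets
nothing of it, or it contains all of them. In the latter case her own report contains her true
set, so no other agent is in `N̄`; the effective sets only grow, which can only lower `γ*`,
and `α_i ≤ 1`.
-/

section BundleUtil

variable {m : ℕ}

lemma bundleUtil_le_of_mem {Ri : Finset (Fin m)} (xi : Fin m → ℝ) {j : Fin m} (hj : j ∈ Ri) :
    bundleUtil Ri xi ≤ xi j :=
  csInf_le (Ri.finite_toSet.image _).bddBelow ⟨j, hj, rfl⟩

lemma bundleUtil_eq_of_forall_eq {Ri : Finset (Fin m)} (hRi : Ri.Nonempty) {xi : Fin m → ℝ}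
    {a : ℝ} (h : ∀ j ∈ Ri, xi j = a) : bundleUtil Ri xi = a := by
  have himage : xi '' (Ri : Set (Fin m)) = {a} := by
    refine Set.eq_singleton_iff_unique_mem.2 ⟨?_, ?_⟩
    · obtain ⟨j, hj⟩ := hRi
      exact ⟨j, hj, h j hj⟩
    · rintro _ ⟨j, hj, rfl⟩
      exact h j hj
  rw [bundleUtil, himage, csInf_singleton]

lemma bundleUtil_nonneg (Ri : Finset (Fin m)) {xi : Fin m → ℝ} (hxi : ∀ j, 0 ≤ xi j) :
    0 ≤ bundleUtil Ri xi :=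
  Real.sInf_nonneg <| by
    rintro _ ⟨j, -, rfl⟩
    exact hxi j

end BundleUtil

section Mechanism1

variable {n m : ℕ}

lemma w_nonneg (R : Fin n → Finset (Fin m)) (i : Fin n) (j : Fin m) : 0 ≤ w R i j := by
  unfold w; split_ifs <;> norm_num

lemma w_le_w {R R' : Fin n → Finset (Fin m)} (h : ∀ i, R i ⊆ R' i) (i : Fin n) (j : Fin m) :
    w R i j ≤ w R' i j := by
  by_cases hj : j ∈ R i
  · simp [w, hj, h i hj]
  · simpa [w, hj] using w_nonneg R' i j

lemma one_le_sum_w {R : Fin n → Finset (Fin m)} {i : Fin n} {j : Fin m} (hj : j ∈ R i) :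
    1 ≤ ∑ k, w R k j :=
  calc (1 : ℝ) = w R i j := by simp [w, hj]
    _ ≤ ∑ k, w R k j := Finset.single_le_sum (fun k _ => w_nonneg R k j) (Finset.mem_univ i)

variable {s : Fin m → ℝ}

lemma gammaStar_nonneg (s : Fin m → ℝ) (R : Fin n → Finset (Fin m)) : 0 ≤ gammaStar s R :=
  Real.sSup_nonneg fun _ hγ => hγ.1

lemma le_gammaStar {R : Fin n → Finset (Fin m)} {i : Fin n} (hi : (R i).Nonempty) {γ : ℝ}
    (hγ0 : 0 ≤ γ) (hγ : ∀ j, γ * ∑ k, w R k j ≤ s j) : γ ≤ gammaStar s R := by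
  obtain ⟨j, hj⟩ := hi
  have hpos : 0 < ∑ k, w R k j := one_pos.trans_le (one_le_sum_w hj)
  exact le_csSup ⟨s j / ∑ k, w R k j, fun _ hγ' => (le_div_iff₀ hpos).2 (hγ'.2 j)⟩ ⟨hγ0, hγ⟩

lemma gammaStar_mul_sum_w_le (hs : ∀ j, 0 ≤ s j) (R : Fin n → Finset (Fin m)) (j : Fin m) :
    gammaStar s R * ∑ i, w R i j ≤ s j := by
  rcases (Finset.sum_nonneg fun i _ => w_nonneg R i j).eq_or_lt with hzero | hpos
  · rw [← hzero, mul_zero]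
    exact hs j
  · refine (le_div_iff₀ hpos).1 (Real.sSup_le (fun γ hγ => (le_div_iff₀ hpos).2 (hγ.2 j)) ?_)
    exact div_nonneg (hs j) hpos.le

lemma gammaStar_le_of_subset (hs : ∀ j, 0 ≤ s j) {R R' : Fin n → Finset (Fin m)}
    (hRR' : ∀ k, R k ⊆ R' k) {i : Fin n} (hi : (R i).Nonempty) :
    gammaStar s R' ≤ gammaStar s R := by
  refine le_gammaStar hi (gammaStar_nonneg s R') fun j => ?_
  calc gammaStar s R' * ∑ k, w R k j ≤ gammaStar s R' * ∑ k, w R' k j :=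
        mul_le_mul_of_nonneg_left (Finset.sum_le_sum fun k _ => w_le_w hRR' k j)
          (gammaStar_nonneg s R')
    _ ≤ s j := gammaStar_mul_sum_w_le hs R' j

lemma util_mech1 {R : Fin n → Finset (Fin m)} {i : Fin n} (hi : (R i).Nonempty) :
    util R (mech1 s R) i = gammaStar s R :=
  bundleUtil_eq_of_forall_eq hi fun j hj => by simp [mech1, w, hj]

lemma mech1_validAlloc (hs : ∀ j, 0 ≤ s j) (R : Fin n → Finset (Fin m)) :
    validAlloc s (mech1 s R) :=
  ⟨fun i j => mul_nonneg (gammaStar_nonneg s R) (w_nonneg R i j), fun j => by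
    simpa only [mech1, Finset.mul_sum] using gammaStar_mul_sum_w_le hs R j⟩

lemma minUtil_le (R : Fin n → Finset (Fin m)) (x : Fin n → Fin m → ℝ) (i : Fin n) :
    minUtil R x ≤ util R x i :=
  csInf_le (Set.finite_range _).bddBelow ⟨i, rfl⟩

lemma minUtil_nonneg (R : Fin n → Finset (Fin m)) {x : Fin n → Fin m → ℝ}
    (hx : ∀ i j, 0 ≤ x i j) : 0 ≤ minUtil R x :=
  Real.sInf_nonneg <| by
    rintro _ ⟨i, rfl⟩
    exact bundleUtil_nonneg (R i) (hx i)

lemma minUtil_of_isEmpty [IsEmpty (Fin n)] (R : Fin n → Finset (Fin m))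
    (x : Fin n → Fin m → ℝ) : minUtil R x = 0 := by
  rw [minUtil, Set.range_eq_empty, Real.sInf_empty]

lemma minUtil_eq_of_forall_eq [Nonempty (Fin n)] {R : Fin n → Finset (Fin m)}
    {x : Fin n → Fin m → ℝ} {a : ℝ} (h : ∀ i, util R x i = a) : minUtil R x = a := by
  rw [minUtil, funext h, Set.range_const, csInf_singleton]

lemma minUtil_le_gammaStar {R : Fin n → Finset (Fin m)} {i : Fin n} (hi : (R i).Nonempty)
    {y : Fin n → Fin m → ℝ} (hy : validAlloc s y) : minUtil R y ≤ gammaStar s R := by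
  refine le_gammaStar hi (minUtil_nonneg R hy.1) fun j => ?_
  calc minUtil R y * ∑ k, w R k j = ∑ k, minUtil R y * w R k j := Finset.mul_sum _ _ _
    _ ≤ ∑ k, y k j := Finset.sum_le_sum fun k _ => ?_
    _ ≤ s j := hy.2 j
  by_cases hj : j ∈ R k
  · simpa [w, hj] using (minUtil_le R y k).trans (bundleUtil_le_of_mem (y k) hj)
  · simpa [w, hj] using hy.1 k j

theorem mech1_maxminOptimal (hs : ∀ j, 0 ≤ s j) {R : Fin n → Finset (Fin m)}
    (hR : ∀ i, (R i).Nonempty) : maxminOptimal s R (mech1 s R) := by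
  refine ⟨mech1_validAlloc hs R, fun y hy => ?_⟩
  cases isEmpty_or_nonempty (Fin n) with
  | inl _ => simp only [minUtil_of_isEmpty, le_refl]
  | inr hn =>
    rw [minUtil_eq_of_forall_eq fun i => util_mech1 (hR i)]
    exact minUtil_le_gammaStar (hR hn.some) hy

end Mechanism1

section Mechanism2

variable {n m : ℕ}

lemma not_inNbar_of_forall_subset {P : Fin n → Fin n → Finset (Fin m)} {k : Fin n}
    (h : ∀ l, P k l ⊆ P l l) : ¬ inNbar P k :=
  fun ⟨l, hl⟩ => hl.not_subset (h l)

lemma effSets_subset (P : Fin n → Fin n → Finset (Fin m)) (i : Fin n) :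
    effSets P i ⊆ P i i := by
  unfold effSets; split_ifs
  · exact Finset.empty_subset _
  · exact subset_rfl

lemma alpha_le_one (P : Fin n → Fin n → Finset (Fin m)) (i : Fin n) : alpha P i ≤ 1 := by
  unfold alpha; split_ifs
  · exact zero_le_one
  · exact sub_le_self _ (by positivity)

lemma mech2_truthful (s : Fin m → ℝ) (R : Fin n → Finset (Fin m)) :
    mech2 s (fun _ k => R k) = mech1 s R := by
  have hN : ∀ i, ¬ inNbar (fun _ k => R k) i := fun _ =>
    not_inNbar_of_forall_subset fun _ => subset_rfl
  have heff : effSets (fun _ k => R k) = R := funext fun i => by simp [effSets, hN]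
  funext i j
  simp [mech2, alpha, eta, hN, heff]

lemma util_mech2_update_le {s : Fin m → ℝ} (hs : ∀ j, 0 ≤ s j) {R : Fin n → Finset (Fin m)}
    {i : Fin n} (hi : (R i).Nonempty) (Pi' : Fin n → Finset (Fin m)) :
    util R (mech2 s (Function.update (fun _ k => R k) i Pi')) i ≤ gammaStar s R := by
  set P := Function.update (fun _ k => R k) i Pi'
  have hothers : ∀ k ≠ i, P k = R := fun k hk => Function.update_of_ne hk Pi' (fun _ k => R k)
  by_cases hsub : R i ⊆ effSets P i
  · have hown : ∀ l, R l ⊆ P l l := by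
      intro l
      by_cases hl : l = i
      · subst hl
        exact hsub.trans (effSets_subset P l)
      · rw [hothers l hl]
    have heff : ∀ k, R k ⊆ effSets P k := by
      intro k
      by_cases hk : k = i
      · subst hk
        exact hsub
      · have hN : ¬ inNbar P k := not_inNbar_of_forall_subset fun l => hothers k hk ▸ hown l
        simp [effSets, hN, hothers k hk]
    calc util R (mech2 s P) i = alpha P i * gammaStar s (effSets P) :=
          bundleUtil_eq_of_forall_eq hi fun j hj => by simp [mech2, mech1, w, hsub hj]
      _ ≤ gammaStar s (effSets P) :=
        mul_le_of_le_one_left (gammaStar_nonneg s _) (alpha_le_one P i)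
      _ ≤ gammaStar s R := gammaStar_le_of_subset hs heff hi
  · obtain ⟨j, hj, hj'⟩ := Finset.not_subset.1 hsub
    calc util R (mech2 s P) i ≤ mech2 s P i j := bundleUtil_le_of_mem _ hj
      _ = 0 := by simp [mech2, mech1, w, hj']
      _ ≤ gammaStar s R := gammaStar_nonneg s R

end Mechanism2

/-- in Mechanism 2, the truthful profile (every agent `i` reports
`R_k(i) = R̃_k` for all `k`) is a Nash equilibrium, and its outcome is a maxmin-optimal
allocation. -/
theorem mech2_truthful_NE {n m : ℕ} (s : Fin m → ℝ) (hs : ∀ j, 0 < s j)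
    (Rt : Fin n → Finset (Fin m)) (hRt : ∀ i, (Rt i).Nonempty) :
    let Pt : Fin n → Fin n → Finset (Fin m) := fun _ k => Rt k
    (∀ (i : Fin n) (Pi' : Fin n → Finset (Fin m)),
        util Rt (mech2 s (Function.update Pt i Pi')) i ≤ util Rt (mech2 s Pt) i) ∧
      maxminOptimal s Rt (mech2 s Pt) := by
  intro Pt
  have hs' : ∀ j, 0 ≤ s j := fun j => (hs j).le
  have htruthful : mech2 s Pt = mech1 s Rt := mech2_truthful s Rt
  refine ⟨fun i Pi' => ?_, htruthful ▸ mech1_maxminOptimal hs' hRt⟩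
  rw [htruthful, util_mech1 (hRt i)]
  exact util_mech2_update_le hs' (hRt i) Pi'

end BandwidthAlloc
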